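/- arXiv:1602.00403 — 7 statements merged into one kernel-verified Lean document; each statement's English description precedes it below -/
import Mathlib

section
/- Let H be a group, μ a symmetric probability measure on H with finite support, and A a symmetric subset of H. If l > l₀ are two positive integers, then μ^(2l₀)(A·A) ≥ (μ^(l)(A))², where μ^(m) denotes the m-fold convolution of μ and A·A = {a₁a₂ : a₁, a₂ ∈ A}. -/
open Finset
open scoped Pointwise Classical

/-- The mass that a finitely supported measure (an element of the monoid algebra,
whose multiplication is convolution) assigns to a set. -/
noncomputable def massOn {H : Type*} [Group H] (μ : MonoidAlgebra ℝ H) (A : Set H) : ℝ :=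
  ∑ x ∈ μ.coeff.support, if x ∈ A then μ.coeff x else 0

/-! Split `μ^l = μ^(l - l₀) * μ^l₀`, so that `μ^l(A)` is the `μ^(l - l₀)`-average of the masses
`κ(a⁻¹A)` of left translates under `κ = μ^l₀`. By Jensen its square is at most the average of
`κ(a⁻¹A)²`. For `B = a⁻¹A`, symmetry of `κ` gives `κ(B)² = κ(B⁻¹) κ(B) ≤ (κ * κ)(B⁻¹B)`, and
`B⁻¹B ⊆ A⁻¹A = AA` by symmetry of `A`; finally `κ * κ = μ^(2l₀)`. -/

namespace MonoidAlgebra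

section Monoid

variable {M : Type*} [Monoid M]

lemma coeff_mul_nonneg {f g : MonoidAlgebra ℝ M} (hf : ∀ x, 0 ≤ f.coeff x)
    (hg : ∀ x, 0 ≤ g.coeff x) (x : M) : 0 ≤ (f * g).coeff x := by
  rw [coeff_mul]
  exact sum_nonneg fun a _ => sum_nonneg fun b _ => by
    dsimp only
    split_ifs
    exacts [mul_nonneg (hf a) (hg b), le_rfl]

lemma coeff_pow_nonneg {μ : MonoidAlgebra ℝ M} (hμ : ∀ x, 0 ≤ μ.coeff x) (m : ℕ) (x : M) :
    0 ≤ (μ ^ m).coeff x := by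
  induction m generalizing x with
  | zero => rw [pow_zero, one_def, coeff_single]; exact Finsupp.single_nonneg.mpr zero_le_one x
  | succ m ih => rw [pow_succ]; exact coeff_mul_nonneg ih hμ x

lemma lift_one_apply (f : MonoidAlgebra ℝ M) :
    lift ℝ ℝ M 1 f = ∑ x ∈ f.coeff.support, f.coeff x := by
  simp [lift_apply, Finsupp.sum]

lemma sum_coeff_pow (μ : MonoidAlgebra ℝ M) (m : ℕ) :
    ∑ x ∈ (μ ^ m).coeff.support, (μ ^ m).coeff x = (∑ x ∈ μ.coeff.support, μ.coeff x) ^ m := by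
  rw [← lift_one_apply, map_pow, lift_one_apply]

end Monoid

variable {H : Type*} [Group H]

lemma coeff_mul_inv {f g : MonoidAlgebra ℝ H} (hf : ∀ x, f.coeff x⁻¹ = f.coeff x)
    (hg : ∀ x, g.coeff x⁻¹ = g.coeff x) (x : H) : (f * g).coeff x⁻¹ = (g * f).coeff x := by
  simp only [coeff_mul, Finsupp.sum]
  rw [sum_comm]
  refine sum_equiv (Equiv.inv H) (fun b => by simp [hg]) fun b _ => ?_
  refine sum_equiv (Equiv.inv H) (fun a => by simp [hf]) fun a _ => ?_
  simp only [Equiv.inv_apply, hf, hg, mul_comm (g.coeff b)]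
  exact if_congr (by rw [← mul_inv_rev, inv_eq_iff_eq_inv, eq_comm]) rfl rfl

lemma coeff_pow_inv {μ : MonoidAlgebra ℝ H} (hμ : ∀ x, μ.coeff x⁻¹ = μ.coeff x) (m : ℕ)
    (x : H) : (μ ^ m).coeff x⁻¹ = (μ ^ m).coeff x := by
  induction m generalizing x with
  | zero => simp [one_def, coeff_single, Finsupp.single_apply, eq_comm]
  | succ m ih => rw [pow_succ, coeff_mul_inv ih hμ, ← pow_succ, pow_succ']

end MonoidAlgebra

section massOn

variable {H : Type*} [Group H]

open MonoidAlgebra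

lemma massOn_mul_eq_sum_sum (f g : MonoidAlgebra ℝ H) (A : Set H) :
    massOn (f * g) A = ∑ a ∈ f.coeff.support, ∑ b ∈ g.coeff.support,
      if a * b ∈ A then f.coeff a * g.coeff b else 0 := by
  have additive : ∀ (x : H) (u v : ℝ),
      (if x ∈ A then u + v else 0) = (if x ∈ A then u else 0) + (if x ∈ A then v else 0) :=
    fun x u v => by split_ifs <;> simp
  change (f * g).coeff.sum (fun x v => if x ∈ A then v else 0) = _
  simp only [MonoidAlgebra.mul_def, coeff_finsuppSum, coeff_single]
  rw [Finsupp.sum_sum_index (by simp) additive]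
  refine sum_congr rfl fun a _ => ?_
  dsimp only
  rw [Finsupp.sum_sum_index (by simp) additive]
  exact sum_congr rfl fun b _ => Finsupp.sum_single_index (by simp)

lemma massOn_mul (f g : MonoidAlgebra ℝ H) (A : Set H) :
    massOn (f * g) A = ∑ a ∈ f.coeff.support, f.coeff a * massOn g ((a * ·) ⁻¹' A) := by
  rw [massOn_mul_eq_sum_sum]
  simp only [massOn, mul_sum, mul_ite, mul_zero, Set.mem_preimage]

lemma massOn_mono {f : MonoidAlgebra ℝ H} (hf : ∀ x, 0 ≤ f.coeff x) {S T : Set H}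
    (hST : S ⊆ T) : massOn f S ≤ massOn f T :=
  sum_le_sum fun x _ => by
    split_ifs with hS hT hT
    exacts [le_rfl, absurd (hST hS) hT, hf x, le_rfl]

lemma massOn_inv {f : MonoidAlgebra ℝ H} (hf : ∀ x, f.coeff x⁻¹ = f.coeff x) (S : Set H) :
    massOn f S⁻¹ = massOn f S :=
  sum_equiv (Equiv.inv H) (fun x => by simp [hf]) fun x _ => by simp [hf]

lemma massOn_mul_massOn_le {f g : MonoidAlgebra ℝ H} (hf : ∀ x, 0 ≤ f.coeff x)
    (hg : ∀ x, 0 ≤ g.coeff x) (S T : Set H) :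
    massOn f S * massOn g T ≤ massOn (f * g) (S * T) := by
  rw [massOn_mul_eq_sum_sum, massOn, massOn, sum_mul_sum]
  refine sum_le_sum fun a _ => sum_le_sum fun b _ => ?_
  split_ifs with ha hb hab
  all_goals first
    | exact le_rfl | exact absurd (Set.mul_mem_mul ha hb) hab | simp [mul_nonneg (hf a) (hg b)]

lemma sq_massOn_preimage_mul_le {κ : MonoidAlgebra ℝ H} (hκ : ∀ x, 0 ≤ κ.coeff x)
    (hκ_inv : ∀ x, κ.coeff x⁻¹ = κ.coeff x) {A : Set H} (hA : A⁻¹ = A) (a : H) :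
    massOn κ ((a * ·) ⁻¹' A) ^ 2 ≤ massOn (κ * κ) (A * A) := by
  set B := (a * ·) ⁻¹' A
  have hB : B⁻¹ * B ⊆ A * A := by
    rintro _ ⟨x, hx, y, hy, rfl⟩
    have hx' : (a * x⁻¹)⁻¹ ∈ A := hA ▸ Set.inv_mem_inv.mpr hx
    have hxy : (a * x⁻¹)⁻¹ * (a * y) = x * y := by group
    show x * y ∈ A * A
    exact hxy ▸ Set.mul_mem_mul hx' (show a * y ∈ A from hy)
  calc massOn κ B ^ 2 = massOn κ B⁻¹ * massOn κ B := by rw [sq, massOn_inv hκ_inv]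
    _ ≤ massOn (κ * κ) (B⁻¹ * B) := massOn_mul_massOn_le hκ hκ _ _
    _ ≤ massOn (κ * κ) (A * A) := massOn_mono (coeff_mul_nonneg hκ hκ) hB

end massOn

theorem stmt0_general {H : Type*} [Group H] (μ : MonoidAlgebra ℝ H)
    (hpos : ∀ g : H, 0 ≤ μ.coeff g)
    (hprob : ∑ x ∈ μ.coeff.support, μ.coeff x = 1)
    (hsymm : ∀ g : H, μ.coeff g⁻¹ = μ.coeff g)
    (A : Set H) (hA : A⁻¹ = A)
    (l l₀ : ℕ) (hll : l₀ < l) :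
    (massOn (μ ^ l) A) ^ 2 ≤ massOn (μ ^ (2 * l₀)) (A * A) := by
  obtain ⟨k, rfl⟩ : ∃ k, l = k + l₀ := ⟨l - l₀, by omega⟩
  set κ := μ ^ l₀
  set ν := μ ^ k
  have hν_nonneg : ∀ a ∈ ν.coeff.support, 0 ≤ ν.coeff a :=
    fun a _ => MonoidAlgebra.coeff_pow_nonneg hpos k a
  have hν_prob : ∑ a ∈ ν.coeff.support, ν.coeff a = 1 := by
    rw [MonoidAlgebra.sum_coeff_pow, hprob, one_pow]
  have hκ_sq : ∀ a, massOn κ ((a * ·) ⁻¹' A) ^ 2 ≤ massOn (κ * κ) (A * A) :=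
    sq_massOn_preimage_mul_le (MonoidAlgebra.coeff_pow_nonneg hpos l₀)
      (MonoidAlgebra.coeff_pow_inv hsymm l₀) hA
  calc massOn (μ ^ (k + l₀)) A ^ 2
      = (∑ a ∈ ν.coeff.support, ν.coeff a * massOn κ ((a * ·) ⁻¹' A)) ^ 2 := by
        rw [pow_add, massOn_mul]
    _ ≤ ∑ a ∈ ν.coeff.support, ν.coeff a * massOn κ ((a * ·) ⁻¹' A) ^ 2 :=
        (even_two.convexOn_pow).map_sum_le hν_nonneg hν_prob fun _ _ => Set.mem_univ _
    _ ≤ ∑ a ∈ ν.coeff.support, ν.coeff a * massOn (κ * κ) (A * A) :=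
        sum_le_sum fun a ha => mul_le_mul_of_nonneg_left (hκ_sq a) (hν_nonneg a ha)
    _ = massOn (μ ^ (2 * l₀)) (A * A) := by rw [← sum_mul, hν_prob, one_mul, two_mul, pow_add]

/-- Let `H` be a group, `μ` a symmetric probability measure on `H` with finite
support, and `A` a symmetric subset of `H`. If `l > l₀` are positive integers, then
`μ^(2l₀)(A·A) ≥ (μ^(l)(A))²`. -/
theorem stmt0 {H : Type*} [Group H] (μ : MonoidAlgebra ℝ H)
    (hpos : ∀ g : H, 0 ≤ μ.coeff g)
    (hprob : ∑ x ∈ μ.coeff.support, μ.coeff x = 1)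
    (hsymm : ∀ g : H, μ.coeff g⁻¹ = μ.coeff g)
    (A : Set H) (hA : A⁻¹ = A)
    (l l₀ : ℕ) (hl₀ : 0 < l₀) (hll : l₀ < l) :
    (massOn (μ ^ l) A) ^ 2 ≤ massOn (μ ^ (2 * l₀)) (A * A) :=
  stmt0_general μ hpos hprob hsymm A hA l l₀ hll
end

section
/- Let T be a rooted tree where each vertex has k children and with n levels, let T^(n) be its n-th generation, and A ⊆ T^(n). Then there exist a power of 2, k', and a subset A' ⊆ A such that: (1) for every x in the (n−1)-st generation that is an ancestor of some element of A', the number of children of x lying in A' equals k'; and (2) |A'| ≥ |A|/(2 log₂ k). -/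
/-!
Group the leaves by their parent. For each `i ≤ L := ⌊log₂ k⌋`, let `Bᵢ` keep `2^i` leaves of
every family that has at least `2^i` of them. A family of size `s < 2^(L+1)` satisfies
`s ≤ ∑_{i ≤ L, 2^i ≤ s} 2^i`, so `|A| ≤ ∑_{i ≤ L} |Bᵢ|` and the largest `Bᵢ` has at least
`|A| / (L + 1)` elements, which is at least `|A| / (2 log₂ k)` because `L ≥ 1` once `k ≥ 2`.
-/

open Finset
open scoped Classical

/-- In the rooted `k`-regular tree of depth `n`, vertices at level `n` are identified with
functions `Fin n → Fin k`; `treeRes` is the projection to the level-`m` ancestor. -/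
def treeRes (k n m : ℕ) (h : m ≤ n) (v : Fin n → Fin k) : Fin m → Fin k :=
  fun j => v (Fin.castLE h j)

namespace Finset

variable {α : Type*}

noncomputable def subsetOfCard (s : Finset α) (c : ℕ) : Finset α :=
  if h : c ≤ s.card then (exists_subset_card_eq h).choose else ∅

theorem subsetOfCard_subset (s : Finset α) (c : ℕ) : s.subsetOfCard c ⊆ s := by
  unfold subsetOfCard
  split_ifs with h
  · exact (exists_subset_card_eq h).choose_spec.1
  · exact empty_subset s

theorem card_subsetOfCard (s : Finset α) (c : ℕ) :
    (s.subsetOfCard c).card = if c ≤ s.card then c else 0 := by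
  unfold subsetOfCard
  split_ifs with h
  · exact (exists_subset_card_eq h).choose_spec.2
  · rfl

theorem le_card_of_mem_subsetOfCard {s : Finset α} {c : ℕ} {a : α} (ha : a ∈ s.subsetOfCard c) :
    c ≤ s.card := by
  by_contra hc
  rw [subsetOfCard, dif_neg hc] at ha
  exact notMem_empty a ha

end Finset

theorem le_sum_range_pow_two_of_lt {m s : ℕ} (hs : s < 2 ^ m) :
    s ≤ ∑ i ∈ range m, if 2 ^ i ≤ s then 2 ^ i else 0 := by
  induction m generalizing s with
  | zero => simp_all
  | succ m ih =>
    rw [sum_range_succ]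
    by_cases h : 2 ^ m ≤ s
    · have hrest := ih (s := s - 2 ^ m) (by rw [pow_succ] at hs; omega)
      have hmono : (∑ i ∈ range m, if 2 ^ i ≤ s - 2 ^ m then 2 ^ i else 0)
          ≤ ∑ i ∈ range m, if 2 ^ i ≤ s then 2 ^ i else 0 :=
        sum_le_sum fun i _ => by split_ifs <;> omega
      rw [if_pos h]
      omega
    · rw [if_neg h]
      exact (ih (by omega)).trans (Nat.le_add_right _ _)

section TrimFibers

variable {α β : Type*} [DecidableEq α] [DecidableEq β] (f : α → β) (A : Finset α) (c : ℕ)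

noncomputable def trimFibers : Finset α :=
  (A.image f).biUnion fun p => (A.filter (f · = p)).subsetOfCard c

variable {f A c}

theorem mem_trimFibers {a : α} :
    a ∈ trimFibers f A c ↔ a ∈ (A.filter (f · = f a)).subsetOfCard c := by
  constructor
  · intro ha
    obtain ⟨p, -, hap⟩ := mem_biUnion.mp ha
    obtain rfl := (mem_filter.mp (subsetOfCard_subset _ _ hap)).2
    exact hap
  · intro ha
    have haA := (mem_filter.mp (subsetOfCard_subset _ _ ha)).1
    exact mem_biUnion.mpr ⟨f a, mem_image_of_mem f haA, ha⟩

theorem trimFibers_subset : trimFibers f A c ⊆ A := fun _ ha =>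
  (mem_filter.mp (subsetOfCard_subset _ _ (mem_trimFibers.mp ha))).1

theorem card_filter_trimFibers {a : α} (ha : a ∈ trimFibers f A c) :
    ((trimFibers f A c).filter (f · = f a)).card = c := by
  have hfiber :
      (trimFibers f A c).filter (f · = f a) = (A.filter (f · = f a)).subsetOfCard c := by
    ext b
    simp only [mem_filter, mem_trimFibers]
    constructor
    · rintro ⟨hb, hfb⟩
      rwa [hfb] at hb
    · intro hb
      have hfb := (mem_filter.mp (subsetOfCard_subset _ _ hb)).2
      exact ⟨by rwa [hfb], hfb⟩
  rw [hfiber, card_subsetOfCard, if_pos (le_card_of_mem_subsetOfCard (mem_trimFibers.mp ha))]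

theorem card_trimFibers :
    (trimFibers f A c).card = ∑ p ∈ A.image f, ((A.filter (f · = p)).subsetOfCard c).card :=
  card_biUnion fun _ _ _ _ hpq => disjoint_left.mpr fun _ hbp hbq =>
    hpq ((mem_filter.mp (subsetOfCard_subset _ _ hbp)).2.symm.trans
      (mem_filter.mp (subsetOfCard_subset _ _ hbq)).2)

theorem card_le_sum_card_trimFibers_pow_two {m : ℕ}
    (hA : ∀ p, (A.filter (f · = p)).card < 2 ^ m) :
    A.card ≤ ∑ i ∈ range m, (trimFibers f A (2 ^ i)).card := by
  simp_rw [card_trimFibers, card_subsetOfCard]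
  rw [card_eq_sum_card_image f A, sum_comm]
  exact sum_le_sum fun p _ => le_sum_range_pow_two_of_lt (hA p)

theorem exists_card_le_mul_card_trimFibers_pow_two {m : ℕ}
    (hA : ∀ p, (A.filter (f · = p)).card < 2 ^ m) :
    ∃ i, A.card ≤ m * (trimFibers f A (2 ^ i)).card := by
  have hsum := card_le_sum_card_trimFibers_pow_two hA
  rcases m.eq_zero_or_pos with rfl | hm
  · exact ⟨0, by simpa using hsum⟩
  have hsum' : ∑ _i ∈ range m, A.card ≤ ∑ i ∈ range m, m * (trimFibers f A (2 ^ i)).card := by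
    rw [sum_const, card_range, smul_eq_mul, ← mul_sum]
    exact Nat.mul_le_mul_left m hsum
  obtain ⟨i, -, hi⟩ := exists_le_of_sum_le (nonempty_range_iff.mpr hm.ne') hsum'
  exact ⟨i, hi⟩

end TrimFibers

theorem card_filter_treeRes_le (k n m : ℕ) (h : m ≤ n) (A : Finset (Fin n → Fin k))
    (p : Fin m → Fin k) : (A.filter (treeRes k n m h · = p)).card ≤ k ^ (n - m) := by
  calc _ ≤ (univ : Finset (Fin (n - m) → Fin k)).card :=
        card_le_card_of_injOn (fun v j => v ⟨m + j, by omega⟩)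
          (fun _ _ => mem_coe.mpr (mem_univ _)) ?_
    _ = k ^ (n - m) := by simp
  intro v hv w hw hvw
  have hvw_init := (mem_filter.mp hv).2.trans (mem_filter.mp hw).2.symm
  funext j
  by_cases hj : (j : ℕ) < m
  · exact congrFun hvw_init ⟨j, hj⟩
  · simpa only [Nat.add_sub_cancel' (not_lt.mp hj)] using congrFun hvw ⟨j - m, by omega⟩

theorem natLog_add_one_le_two_mul_logb {k : ℕ} (hk : 2 ≤ k) :
    (Nat.log 2 k + 1 : ℝ) ≤ 2 * Real.logb 2 k := by
  have hlog : (1 : ℝ) ≤ Nat.log 2 k := by exact_mod_cast Nat.log_pos one_lt_two hk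
  have := Real.natLog_le_logb k 2
  push_cast at this
  linarith

theorem stmt3_general (k n : ℕ) (A : Finset (Fin n → Fin k)) :
    ∃ (i : ℕ) (A' : Finset (Fin n → Fin k)), A' ⊆ A ∧
      (∀ a ∈ A',
        (A'.filter (fun b =>
          treeRes k n (n - 1) (Nat.sub_le n 1) b = treeRes k n (n - 1) (Nat.sub_le n 1) a)).card
          = 2 ^ i) ∧
      (A.card : ℝ) / (2 * Real.logb 2 k) ≤ (A'.card : ℝ) := by
  rcases lt_or_ge k 2 with hk | hk
  -- `logb 2 k = 0` for `k ≤ 1`, so the required bound is `|A| / 0 = 0`.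
  · refine ⟨0, ∅, empty_subset A, by simp, ?_⟩
    have hlog : Real.logb 2 k = 0 := by interval_cases k <;> simp
    simp [hlog]
  set π := treeRes k n (n - 1) (Nat.sub_le n 1)
  have hfiber (p) : (A.filter (π · = p)).card < 2 ^ (Nat.log 2 k + 1) :=
    calc _ ≤ k ^ (n - (n - 1)) := card_filter_treeRes_le k n (n - 1) _ A p
      _ ≤ k ^ 1 := Nat.pow_le_pow_right (by omega) (by omega)
      _ < 2 ^ (Nat.log 2 k + 1) := (pow_one k).trans_lt (Nat.lt_pow_succ_log_self one_lt_two k)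
  obtain ⟨i, hi⟩ := exists_card_le_mul_card_trimFibers_pow_two hfiber
  refine ⟨i, trimFibers π A (2 ^ i), trimFibers_subset, fun a ha => card_filter_trimFibers ha, ?_⟩
  calc (A.card : ℝ) / (2 * Real.logb 2 k) ≤ A.card / (Nat.log 2 k + 1) :=
        div_le_div_of_nonneg_left (by positivity) (by positivity)
          (natLog_add_one_le_two_mul_logb hk)
    _ ≤ _ := by
      rw [div_le_iff₀ (by positivity)]
      exact_mod_cast hi.trans_eq (mul_comm _ _)

/-- Let `T` be the rooted tree where each vertex has `k` children, with `n`
levels, and `A ⊆ T^(n)`.  Then there are a power of two `k' = 2^i` and `A' ⊆ A` such that every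
vertex at level `n-1` that is an ancestor of some element of `A'` has exactly `k'` children
in `A'`, and `|A'| ≥ |A| / (2 log₂ k)`. -/
theorem stmt3 (k n : ℕ) (hk : 0 < k) (hn : 0 < n)
    (A : Finset (Fin n → Fin k)) :
    ∃ (i : ℕ) (A' : Finset (Fin n → Fin k)), A' ⊆ A ∧
      (∀ a ∈ A',
        (A'.filter (fun b =>
          treeRes k n (n - 1) (Nat.sub_le n 1) b = treeRes k n (n - 1) (Nat.sub_le n 1) a)).card
          = 2 ^ i) ∧
      (A.card : ℝ) / (2 * Real.logb 2 k) ≤ (A'.card : ℝ) :=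
  stmt3_general k n A
end

section
/- Let F be a field, G a subgroup of GL_n(F), and A a symmetric subset of G containing the identity that generates a subgroup which is Zariski-dense in G. Then the F-linear span of the n²-fold product set A·A·…·A (n² factors) equals the F-span F[G] of G inside the matrix algebra M_n(F). -/
/-!
Let `P` be the span of `A` in `M_n(F)`. The span of `A ^ m` is `P ^ m`; since `1 ∈ A` these
subspaces increase with `m`, and once two consecutive ones agree the chain is constant. In the
`n²`-dimensional space `M_n(F)` it must stall by step `n²`, so the span of `A ^ (n²)` contains
every `A ^ m`, hence (as `A` is symmetric) all of `⟨A⟩`. A linear functional on `M_n(F)` is a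
polynomial in the entries, so by Zariski density one vanishing on `⟨A⟩` vanishes on `G`, and the
span of `⟨A⟩` is all of `F[G]`.
-/

open scoped Pointwise MatrixGroups
open Module

theorem Submodule.exists_le_finrank_eq_succ_of_monotone {K M : Type*} [DivisionRing K]
    [AddCommGroup M] [Module K M] [FiniteDimensional K M] {V : ℕ → Submodule K M}
    (hV : Monotone V) : ∃ k ≤ finrank K M, V k = V (k + 1) := by
  by_contra! hne
  have hgrow : ∀ k ≤ finrank K M + 1, k ≤ finrank K (V k) := by
    intro k hk
    induction k with
    | zero => exact Nat.zero_le _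
    | succ k ih =>
      have hlt : V k < V (k + 1) := (hV k.le_succ).lt_of_ne (hne k (by omega))
      have := Submodule.finrank_lt_finrank_of_lt hlt
      have := ih (by omega)
      omega
  have := (hgrow _ le_rfl).trans (Submodule.finrank_le _)
  omega

theorem Submodule.pow_add_eq_of_pow_eq_pow_succ {R A : Type*} [CommSemiring R] [Semiring A]
    [Algebra R A] {P : Submodule R A} {k : ℕ} (hk : P ^ k = P ^ (k + 1)) (j : ℕ) :
    P ^ (k + j) = P ^ k := by
  induction j with
  | zero => rfl
  | succ j ih => rw [← add_assoc, pow_succ, ih, ← pow_succ, ← hk]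

theorem Submodule.pow_le_pow_finrank {K A : Type*} [Field K] [Ring A] [Algebra K A]
    [FiniteDimensional K A] {P : Submodule K A} (hP : (1 : A) ∈ P) (m : ℕ) :
    P ^ m ≤ P ^ finrank K A := by
  have hone : 1 ≤ P := Submodule.one_le.mpr hP
  obtain ⟨k, hkd, hk⟩ := exists_le_finrank_eq_succ_of_monotone
    (fun _ _ h => pow_le_pow_right' hone h : Monotone (P ^ ·))
  calc P ^ m ≤ P ^ (k + (m + finrank K A - k)) := pow_le_pow_right' hone (by omega)
    _ = P ^ k := pow_add_eq_of_pow_eq_pow_succ hk _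
    _ ≤ P ^ finrank K A := pow_le_pow_right' hone hkd

theorem Subgroup.exists_mem_pow_of_mem_closure {G : Type*} [Group G] {s : Set G} (hs : s⁻¹ = s)
    {x : G} (hx : x ∈ closure s) : ∃ m : ℕ, x ∈ s ^ m := by
  induction hx using closure_induction with
  | mem x hx => exact ⟨1, by rwa [pow_one]⟩
  | one => exact ⟨0, by rw [pow_zero]; rfl⟩
  | mul x y _ _ hx hy =>
    obtain ⟨m₁, hm₁⟩ := hx
    obtain ⟨m₂, hm₂⟩ := hy
    exact ⟨m₁ + m₂, by rw [pow_add]; exact Set.mul_mem_mul hm₁ hm₂⟩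
  | inv x _ hx =>
    obtain ⟨m, hm⟩ := hx
    exact ⟨m, by rw [← hs, inv_pow]; exact Set.inv_mem_inv.mpr hm⟩

theorem Submodule.span_image_closure_eq_span_image_pow_finrank {G K R : Type*} [Group G]
    [Field K] [Ring R] [Algebra K R] [FiniteDimensional K R] (f : G →* R) {s : Set G}
    (hs1 : 1 ∈ s) (hs : s⁻¹ = s) :
    span K (f '' Subgroup.closure s) = span K (f '' (s ^ finrank K R)) := by
  have hpow : ∀ m, span K (f '' (s ^ m)) = span K (f '' s) ^ m := fun m => by
    rw [Set.image_pow, Submodule.span_pow]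
  have hone : (1 : R) ∈ span K (f '' s) := subset_span ⟨1, hs1, map_one f⟩
  refine le_antisymm ?_ (span_mono (Set.image_mono (Subgroup.pow_subset Subgroup.subset_closure)))
  rw [span_le]
  rintro _ ⟨x, hx, rfl⟩
  obtain ⟨m, hm⟩ := Subgroup.exists_mem_pow_of_mem_closure hs hx
  have hfx : f x ∈ span K (f '' (s ^ m)) := subset_span ⟨x, hm, rfl⟩
  rw [hpow] at hfx ⊢
  exact pow_le_pow_finrank hone m hfx

theorem Matrix.exists_mvPolynomial_eval_eq {m n K : Type*} [Fintype m] [Fintype n]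
    [DecidableEq m] [DecidableEq n] [CommRing K] (φ : Matrix m n K →ₗ[K] K) :
    ∃ p : MvPolynomial (m × n) K, ∀ M : Matrix m n K,
      MvPolynomial.eval (fun ij => M ij.1 ij.2) p = φ M := by
  refine ⟨∑ ij, MvPolynomial.C (φ (single ij.1 ij.2 1)) * MvPolynomial.X ij, fun M => ?_⟩
  conv_rhs => rw [matrix_eq_sum_single M]
  simp only [map_sum, map_mul, MvPolynomial.eval_C, MvPolynomial.eval_X, ← Fintype.sum_prod_type']
  refine Finset.sum_congr rfl fun ij _ => ?_
  rw [show single ij.1 ij.2 (M ij.1 ij.2) = M ij.1 ij.2 • single ij.1 ij.2 1 by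
      simp [smul_single],
    map_smul, smul_eq_mul, mul_comm]

theorem Matrix.span_le_span_of_mvPolynomial_vanishing {m n K : Type*} [Fintype m] [Fintype n]
    [Field K] {S T : Set (Matrix m n K)}
    (hST : ∀ p : MvPolynomial (m × n) K,
      (∀ M ∈ S, MvPolynomial.eval (fun ij => M ij.1 ij.2) p = 0) →
      ∀ M ∈ T, MvPolynomial.eval (fun ij => M ij.1 ij.2) p = 0) :
    Submodule.span K T ≤ Submodule.span K S := by
  classical
  rw [Submodule.span_le]
  intro M hM
  by_contra hMS
  obtain ⟨φ, hφM, hφS⟩ := Submodule.exists_le_ker_of_notMem hMS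
  obtain ⟨p, hp⟩ := exists_mvPolynomial_eval_eq φ
  exact hφM <| hp M ▸ hST p (fun N hN => (hp N).trans (hφS (Submodule.subset_span hN))) M hM

/-- Let `F` be a field, `G` a subgroup of `GL_n(F)`, and `A` a symmetric subset
of `G` containing the identity whose generated subgroup is Zariski-dense in `G` (every polynomial
in the matrix entries vanishing on `⟨A⟩` vanishes on `G`).  Then the `F`-linear span (inside the
matrix algebra `M_n(F)`) of the `n²`-fold product set `A ⋯ A` equals the `F`-span `F[G]` of `G`. -/
theorem stmt6 {n : ℕ} {F : Type*} [Field F]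
    (G : Subgroup (GL (Fin n) F)) (A : Set (GL (Fin n) F))
    (hAG : A ⊆ (G : Set (GL (Fin n) F))) (hA1 : (1 : GL (Fin n) F) ∈ A) (hAsymm : A⁻¹ = A)
    (hdense : ∀ p : MvPolynomial (Fin n × Fin n) F,
      (∀ a ∈ Subgroup.closure A,
        MvPolynomial.eval (fun ij => ((a : Matrix (Fin n) (Fin n) F)) ij.1 ij.2) p = 0) →
      (∀ g ∈ G,
        MvPolynomial.eval (fun ij => ((g : Matrix (Fin n) (Fin n) F)) ij.1 ij.2) p = 0)) :
    Submodule.span F ((fun g : GL (Fin n) F => (g : Matrix (Fin n) (Fin n) F)) '' (A ^ (n ^ 2)))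
      = Submodule.span F
          ((fun g : GL (Fin n) F => (g : Matrix (Fin n) (Fin n) F)) '' (G : Set (GL (Fin n) F))) := by
  have hdim : n ^ 2 = finrank F (Matrix (Fin n) (Fin n) F) := by simp [finrank_matrix, sq]
  have hzariski : Submodule.span F (Units.val '' (G : Set (GL (Fin n) F)))
      ≤ Submodule.span F (Units.val '' (Subgroup.closure A : Set (GL (Fin n) F))) := by
    refine Matrix.span_le_span_of_mvPolynomial_vanishing ?_
    rintro p hp _ ⟨g, hg, rfl⟩
    exact hdense p (fun a ha => hp _ ⟨a, ha, rfl⟩) g hg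
  rw [hdim]
  exact (Submodule.span_image_closure_eq_span_image_pow_finrank
    (Units.coeHom _) hA1 hAsymm).symm.trans <|
      le_antisymm (Submodule.span_mono (Set.image_mono ((Subgroup.closure_le G).mpr hAG))) hzariski
end

section
/- Let p be a prime, m, k, N positive integers with k ≥ m. Work in a matrix group over Z_p. If tⱼ ≡ 1 + p^m yⱼ (mod p^{2m}) for 1 ≤ j ≤ N and γ₀ ≡ 1 + p^k ξ₀ (mod p^{2k}), then the iterated commutator C_{t₁} ∘ ⋯ ∘ C_{t_N}(γ₀) ≡ 1 + p^{k+Nm} ad(y₁)ad(y₂)⋯ad(y_N)(ξ₀) (mod p^{k+(N+1)m}), where C_t(γ) := tγt⁻¹γ⁻¹ and ad(y)(ξ) := yξ − ξy. -/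
open Finset

/-- Entrywise congruence of matrices over `ℤ_p` modulo `p^r`. -/
def MatMod {d : ℕ} (p : ℕ) [Fact p.Prime] (r : ℕ)
    (A B : Matrix (Fin d) (Fin d) ℤ_[p]) : Prop :=
  ∃ C : Matrix (Fin d) (Fin d) ℤ_[p], A - B = ((p : ℤ_[p]) ^ r) • C

/-- The commutator map `C_t(γ) = t γ t⁻¹ γ⁻¹`. -/
noncomputable def commMap {d : ℕ} {p : ℕ} [Fact p.Prime]
    (t γ : (Matrix (Fin d) (Fin d) ℤ_[p])ˣ) : (Matrix (Fin d) (Fin d) ℤ_[p])ˣ :=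
  t * γ * t⁻¹ * γ⁻¹

/-- `ad(y)(ξ) = yξ − ξy`. -/
noncomputable def adMat {d : ℕ} {p : ℕ} [Fact p.Prime]
    (y ξ : Matrix (Fin d) (Fin d) ℤ_[p]) : Matrix (Fin d) (Fin d) ℤ_[p] :=
  y * ξ - ξ * y

/-!
Write `t = 1 + p^m Y` and `γ = 1 + p^K Ξ` with `Y ≡ y` and `Ξ ≡ ξ` modulo `p^m`. Then
`tγt⁻¹γ⁻¹ - 1 = (tγ - γt) t⁻¹γ⁻¹` and `tγ - γt = p^{K+m} (YΞ - ΞY)`, while `t⁻¹γ⁻¹ ≡ 1`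
modulo `p^m` as soon as `m ≤ K`. Hence one commutator with a `t ≡ 1 + p^m y` turns
`γ ≡ 1 + p^K ξ (mod p^{K+m})` into `C_t(γ) ≡ 1 + p^{K+m} [y, ξ] (mod p^{K+2m})`, a congruence
of the same shape with `K` replaced by `K + m`; induction on `N` gives the theorem.
-/

section Algebra

variable {S A : Type*} [CommRing S] [Ring A] [Algebra S A] (π : S)

theorem Units.exists_val_inv_eq_one_add_smul {r : ℕ} {u : Aˣ} {x : A}
    (hu : (u : A) = 1 + π ^ r • x) : ∃ x', ((u⁻¹ : Aˣ) : A) = 1 + π ^ r • x' := by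
  refine ⟨-((u⁻¹ : Aˣ) * x), ?_⟩
  have h := u.inv_mul
  rw [hu, mul_add, mul_one, mul_smul_comm] at h
  rw [smul_neg, ← sub_eq_add_neg]
  exact eq_sub_of_add_eq h

theorem Units.val_commutator (t γ : Aˣ) :
    ((t * γ * t⁻¹ * γ⁻¹ : Aˣ) : A) = 1 + (t * γ - γ * t) * ((t⁻¹ : Aˣ) * (γ⁻¹ : Aˣ) : A) := by
  have h : ((γ * t * (t⁻¹ * γ⁻¹) : Aˣ) : A) = 1 := by
    rw [show γ * t * (t⁻¹ * γ⁻¹) = 1 by group, Units.val_one]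
  simp only [Units.val_mul] at h
  rw [sub_mul, h]
  simp only [Units.val_mul, mul_assoc, add_sub_cancel]

theorem Units.exists_val_commutator_eq {m K : ℕ} (hmK : m ≤ K) {t γ : Aˣ} {y ξ a b : A}
    (ht : (t : A) = 1 + π ^ m • (y + π ^ m • a))
    (hγ : (γ : A) = 1 + π ^ K • (ξ + π ^ m • b)) :
    ∃ c, ((t * γ * t⁻¹ * γ⁻¹ : Aˣ) : A) = 1 + π ^ (K + m) • (y * ξ - ξ * y + π ^ m • c) := by
  obtain ⟨K', rfl⟩ := Nat.exists_eq_add_of_le hmK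
  obtain ⟨a', ht'⟩ := Units.exists_val_inv_eq_one_add_smul π ht
  have hγm : (γ : A) = 1 + π ^ m • (π ^ K' • (ξ + π ^ m • b)) := by
    rw [hγ]; module
  obtain ⟨b', hγ'⟩ := Units.exists_val_inv_eq_one_add_smul π hγm
  set E : A := y * b - b * y + a * ξ - ξ * a + π ^ m • (a * b - b * a)
  set W : A := a' + b' + π ^ m • (a' * b')
  have hcomm : (t * γ - γ * t : A) = π ^ (m + K' + m) • (y * ξ - ξ * y + π ^ m • E) := by
    rw [ht, hγ]
    simp only [E, mul_add, add_mul, mul_one, one_mul, smul_mul_assoc, mul_smul_comm]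
    module
  have hinv : ((t⁻¹ : Aˣ) * (γ⁻¹ : Aˣ) : A) = 1 + π ^ m • W := by
    rw [ht', hγ']
    simp only [W, mul_add, add_mul, mul_one, one_mul, smul_mul_assoc, mul_smul_comm]
    module
  refine ⟨E + (y * ξ - ξ * y + π ^ m • E) * W, ?_⟩
  rw [Units.val_commutator, hcomm, hinv]
  simp only [mul_add, add_mul, mul_one, smul_mul_assoc, mul_smul_comm, smul_add]
  module

end Algebra

section MatMod

variable {d p : ℕ} [Fact p.Prime]

local notation "Mat" => Matrix (Fin d) (Fin d) ℤ_[p]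

theorem MatMod.of_le {r s : ℕ} (hsr : s ≤ r) {A B : Mat} (h : MatMod p r A B) :
    MatMod p s A B := by
  obtain ⟨C, hC⟩ := h
  refine ⟨(p : ℤ_[p]) ^ (r - s) • C, ?_⟩
  rw [hC, smul_smul, ← pow_add, Nat.add_sub_cancel' hsr]

theorem MatMod.commMap {m K : ℕ} (hmK : m ≤ K) {t γ : Matˣ} {y ξ : Mat}
    (ht : MatMod p (2 * m) t (1 + (p : ℤ_[p]) ^ m • y))
    (hγ : MatMod p (K + m) γ (1 + (p : ℤ_[p]) ^ K • ξ)) :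
    MatMod p (K + 2 * m) (commMap t γ : Mat) (1 + (p : ℤ_[p]) ^ (K + m) • adMat y ξ) := by
  obtain ⟨a, ha⟩ := ht
  obtain ⟨b, hb⟩ := hγ
  have ht' : (t : Mat) = 1 + (p : ℤ_[p]) ^ m • (y + (p : ℤ_[p]) ^ m • a) := by
    rw [eq_add_of_sub_eq ha]; module
  have hγ' : (γ : Mat) = 1 + (p : ℤ_[p]) ^ K • (ξ + (p : ℤ_[p]) ^ m • b) := by
    rw [eq_add_of_sub_eq hb]; module
  obtain ⟨c, hc⟩ := Units.exists_val_commutator_eq (p : ℤ_[p]) hmK ht' hγ'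
  refine ⟨c, ?_⟩
  rw [_root_.commMap, hc, adMat]
  module

theorem MatMod.foldr_commMap {m N K : ℕ} (hmK : m ≤ K) {t : Fin N → Matˣ} {y : Fin N → Mat}
    {γ : Matˣ} {ξ : Mat} (ht : ∀ j, MatMod p (2 * m) (t j : Mat) (1 + (p : ℤ_[p]) ^ m • y j))
    (hγ : MatMod p (K + m) γ (1 + (p : ℤ_[p]) ^ K • ξ)) :
    MatMod p (K + N * m + m) (((List.ofFn t).foldr _root_.commMap γ : Matˣ) : Mat)
      (1 + (p : ℤ_[p]) ^ (K + N * m) • (List.ofFn y).foldr adMat ξ) := by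
  induction N with
  | zero => simpa using hγ
  | succ N ih =>
    have h := MatMod.commMap (by omega) (ht 0) (ih (t := fun i ↦ t i.succ)
      (y := fun i ↦ y i.succ) fun i ↦ ht i.succ)
    rw [List.ofFn_succ, List.foldr_cons, List.ofFn_succ, List.foldr_cons]
    rwa [show K + (N + 1) * m + m = K + N * m + 2 * m by ring,
      show K + (N + 1) * m = K + N * m + m by ring]

end MatMod

theorem stmt8_general {d : ℕ} (p : ℕ) [Fact p.Prime] (m k N : ℕ)
    (hkm : m ≤ k)
    (t : Fin N → (Matrix (Fin d) (Fin d) ℤ_[p])ˣ)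
    (y : Fin N → Matrix (Fin d) (Fin d) ℤ_[p])
    (γ₀ : (Matrix (Fin d) (Fin d) ℤ_[p])ˣ)
    (ξ₀ : Matrix (Fin d) (Fin d) ℤ_[p])
    (ht : ∀ j, MatMod p (2 * m) (t j : Matrix (Fin d) (Fin d) ℤ_[p])
      (1 + ((p : ℤ_[p]) ^ m) • y j))
    (hγ : MatMod p (2 * k) (γ₀ : Matrix (Fin d) (Fin d) ℤ_[p])
      (1 + ((p : ℤ_[p]) ^ k) • ξ₀)) :
    MatMod p (k + (N + 1) * m)
      (((List.ofFn t).foldr commMap γ₀ : (Matrix (Fin d) (Fin d) ℤ_[p])ˣ) :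
        Matrix (Fin d) (Fin d) ℤ_[p])
      (1 + ((p : ℤ_[p]) ^ (k + N * m)) • ((List.ofFn y).foldr adMat ξ₀)) := by
  have h := MatMod.foldr_commMap hkm ht (hγ.of_le (by omega))
  rwa [add_assoc, ← Nat.succ_mul] at h

/-- Let `p` be a prime, `m, k, N` positive integers with `k ≥ m`.  If
`tⱼ ≡ 1 + p^m yⱼ (mod p^{2m})` for `1 ≤ j ≤ N` and `γ₀ ≡ 1 + p^k ξ₀ (mod p^{2k})` in
`GL_d(ℤ_p)`, then
`C_{t₁} ∘ ⋯ ∘ C_{t_N}(γ₀) ≡ 1 + p^{k+Nm} ad(y₁)⋯ad(y_N)(ξ₀) (mod p^{k+(N+1)m})`,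
where `C_t(γ) = tγt⁻¹γ⁻¹` and `ad(y)(ξ) = yξ − ξy`. -/
theorem stmt8 {d : ℕ} (p : ℕ) [Fact p.Prime] (m k N : ℕ)
    (hm : 0 < m) (hk : 0 < k) (hN : 0 < N) (hkm : m ≤ k)
    (t : Fin N → (Matrix (Fin d) (Fin d) ℤ_[p])ˣ)
    (y : Fin N → Matrix (Fin d) (Fin d) ℤ_[p])
    (γ₀ : (Matrix (Fin d) (Fin d) ℤ_[p])ˣ)
    (ξ₀ : Matrix (Fin d) (Fin d) ℤ_[p])
    (ht : ∀ j, MatMod p (2 * m) (t j : Matrix (Fin d) (Fin d) ℤ_[p])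
      (1 + ((p : ℤ_[p]) ^ m) • y j))
    (hγ : MatMod p (2 * k) (γ₀ : Matrix (Fin d) (Fin d) ℤ_[p])
      (1 + ((p : ℤ_[p]) ^ k) • ξ₀)) :
    MatMod p (k + (N + 1) * m)
      (((List.ofFn t).foldr commMap γ₀ : (Matrix (Fin d) (Fin d) ℤ_[p])ˣ) :
        Matrix (Fin d) (Fin d) ℤ_[p])
      (1 + ((p : ℤ_[p]) ^ (k + N * m)) • ((List.ofFn y).foldr adMat ξ₀)) :=
  stmt8_general p m k N hkm t y γ₀ ξ₀ ht hγ
end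

section
/- Let g, g' be elements of a matrix group over Z_p (or a product of Z_p's) with g ≡ 1 (mod q₁) and g' ≡ 1 (mod q₁'). Then the commutator (g, g') = g⁻¹g'⁻¹gg' satisfies (g, g') ≡ 1 (mod q₁q₁'). Moreover, writing g = 1 + q₁x + O(q₁²) and g' = 1 + q₁'x' + O(q₁'²), one has (g, g') ≡ 1 + q₁q₁'[x, x'] modulo q := gcd(q₂q₁', q₁q₂') whenever q₁ | q₂ | q₁² and q₁' | q₂' | q₁'². -/
/-- Entrywise congruence of matrices over `ℤ_p` modulo a natural number `q`. -/
def MatModN {d : ℕ} {p : ℕ} [Fact p.Prime] (q : ℕ)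
    (A B : Matrix (Fin d) (Fin d) ℤ_[p]) : Prop :=
  ∃ C : Matrix (Fin d) (Fin d) ℤ_[p], A - B = (q : ℤ_[p]) • C

/-!
Write `g = 1 + a` and `g' = 1 + a'`. Since `g⁻¹g'⁻¹ · g'g = 1`, the commutator satisfies
`g⁻¹g'⁻¹gg' - 1 = g⁻¹g'⁻¹ (aa' - a'a)`, and `aa' - a'a` is divisible by `q₁q₁'`.
For the refined congruence, `aa' - a'a ≡ q₁q₁'[x, x']` modulo both `q₁²q₁'` and `q₁q₁'²`,
while the prefactor `g⁻¹g'⁻¹` is `1` modulo `gcd(q₁, q₁')`; so the commutator is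
`1 + q₁q₁'[x, x']` modulo `q₁q₁' gcd(q₁, q₁')`, a multiple of `gcd(q₂q₁', q₁q₂')`.
-/

section Ring

variable {R : Type*} [Ring R]

def NModEq (n : ℕ) (a b : R) : Prop := ∃ c : R, a - b = n • c

namespace NModEq

variable {m n n' : ℕ} {a b c d : R}

theorem iff_sub_zero : NModEq n a b ↔ NModEq n (a - b) 0 := by
  simp only [NModEq, sub_zero]

theorem trans (h : NModEq n a b) (h' : NModEq n b c) : NModEq n a c := by
  obtain ⟨e, he⟩ := h
  obtain ⟨e', he'⟩ := h'
  exact ⟨e + e', by rw [smul_add, ← he, ← he', sub_add_sub_cancel]⟩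

theorem symm (h : NModEq n a b) : NModEq n b a := by
  obtain ⟨e, he⟩ := h
  exact ⟨-e, by rw [smul_neg, ← he, neg_sub]⟩

theorem add (h : NModEq n a b) (h' : NModEq n c d) : NModEq n (a + c) (b + d) := by
  obtain ⟨e, he⟩ := h
  obtain ⟨e', he'⟩ := h'
  exact ⟨e + e', by rw [smul_add, ← he, ← he']; abel⟩

theorem sub (h : NModEq n a b) (h' : NModEq n c d) : NModEq n (a - c) (b - d) := by
  obtain ⟨e, he⟩ := h
  obtain ⟨e', he'⟩ := h'
  exact ⟨e - e', by rw [smul_sub, ← he, ← he']; abel⟩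

theorem of_dvd (hmn : m ∣ n) (h : NModEq n a b) : NModEq m a b := by
  obtain ⟨k, rfl⟩ := hmn
  obtain ⟨e, he⟩ := h
  exact ⟨k • e, by rw [he, mul_nsmul']⟩

theorem mul_left (c : R) (h : NModEq n a b) : NModEq n (c * a) (c * b) := by
  obtain ⟨e, he⟩ := h
  exact ⟨c * e, by rw [← mul_sub, he, mul_smul_comm]⟩

theorem mul_right (c : R) (h : NModEq n a b) : NModEq n (a * c) (b * c) := by
  obtain ⟨e, he⟩ := h
  exact ⟨e * c, by rw [← sub_mul, he, smul_mul_assoc]⟩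

theorem mul (h : NModEq n a b) (h' : NModEq n c d) : NModEq n (a * c) (b * d) :=
  (h.mul_right c).trans (h'.mul_left b)

theorem mul_zero_of_zero (h : NModEq n a 0) (h' : NModEq n' b 0) :
    NModEq (n * n') (a * b) 0 := by
  obtain ⟨e, he⟩ := h
  obtain ⟨e', he'⟩ := h'
  rw [sub_zero] at he he'
  exact ⟨e * e', by rw [sub_zero, he, he', smul_mul_smul, mul_comm n n']⟩

theorem mul_of_dvd {k k' m m' N : ℕ} (h : NModEq m a b) (h' : NModEq m' c d)
    (hc : NModEq k' c 0) (hb : NModEq k b 0) (hN : N ∣ m * k') (hN' : N ∣ k * m') :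
    NModEq N (a * c) (b * d) := by
  have hsplit : a * c - b * d = (a - b) * c + b * (c - d) := by noncomm_ring
  have hleft := ((iff_sub_zero.1 h).mul_zero_of_zero hc).of_dvd hN
  have hright := (hb.mul_zero_of_zero (iff_sub_zero.1 h')).of_dvd hN'
  rw [iff_sub_zero, hsplit]
  simpa using hleft.add hright

theorem zero_of_sq_nsmul {x : R} (h : NModEq (n ^ 2) a (n • x)) : NModEq n a 0 :=
  (h.of_dvd (dvd_pow_self n two_ne_zero)).trans ⟨x, by rw [sub_zero]⟩

end NModEq

variable {n n' : ℕ}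

theorem units_inv_mul_inv_mul (g g' : Rˣ) : ((g⁻¹ * g'⁻¹ : Rˣ) : R) * (g' * g) = 1 := by
  rw [← mul_inv_rev, ← Units.val_mul, Units.inv_mul]

theorem units_commutator_sub_one (g g' : Rˣ) :
    ((g⁻¹ * g'⁻¹ * g * g' : Rˣ) : R) - 1 =
      ((g⁻¹ * g'⁻¹ : Rˣ) : R) * ((g - 1) * (g' - 1) - (g' - 1) * (g - 1)) := by
  have hcomm : ((g : R) - 1) * (g' - 1) - (g' - 1) * (g - 1) = g * g' - g' * g := by noncomm_ring
  rw [hcomm, mul_sub, ← mul_assoc, units_inv_mul_inv_mul, Units.val_mul, Units.val_mul,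
    Units.val_mul]

theorem commutator_nModEq_zero {a a' : R} (ha : NModEq n a 0) (ha' : NModEq n' a' 0) :
    NModEq (n * n') (a * a' - a' * a) 0 := by
  have hba := ha'.mul_zero_of_zero ha
  rw [mul_comm] at hba
  simpa using (ha.mul_zero_of_zero ha').sub hba

theorem commutator_nModEq {a a' x x' : R} (ha : NModEq (n ^ 2) a (n • x))
    (ha' : NModEq (n' ^ 2) a' (n' • x')) :
    NModEq (n * n' * n.gcd n') (a * a' - a' * a) ((n * n') • (x * x' - x' * x)) := by
  have hdvd : n * n' * n.gcd n' ∣ n ^ 2 * n' :=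
    (mul_dvd_mul_left _ (Nat.gcd_dvd_left n n')).trans (dvd_of_eq (by ring))
  have hdvd' : n * n' * n.gcd n' ∣ n * n' ^ 2 :=
    (mul_dvd_mul_left _ (Nat.gcd_dvd_right n n')).trans (dvd_of_eq (by ring))
  have hnx : NModEq n (n • x) 0 := ⟨x, sub_zero _⟩
  have hnx' : NModEq n' (n' • x') 0 := ⟨x', sub_zero _⟩
  have haa' := ha.mul_of_dvd ha' ha'.zero_of_sq_nsmul hnx hdvd hdvd'
  have ha'a := ha'.mul_of_dvd ha ha.zero_of_sq_nsmul hnx'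
    (hdvd'.trans (dvd_of_eq (by ring))) (hdvd.trans (dvd_of_eq (by ring)))
  convert haa'.sub ha'a using 1
  rw [smul_mul_smul, smul_mul_smul, mul_comm n' n, smul_sub]

theorem units_commutator_nModEq_one {g g' : Rˣ} (hg : NModEq n (g : R) 1)
    (hg' : NModEq n' (g' : R) 1) :
    NModEq (n * n') ((g⁻¹ * g'⁻¹ * g * g' : Rˣ) : R) 1 := by
  rw [NModEq.iff_sub_zero, units_commutator_sub_one]
  simpa using
    (commutator_nModEq_zero (NModEq.iff_sub_zero.1 hg) (NModEq.iff_sub_zero.1 hg')).mul_left _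

theorem units_commutator_nModEq_one_add {g g' : Rˣ} {x x' : R}
    (hg : NModEq (n ^ 2) (g : R) (1 + n • x)) (hg' : NModEq (n' ^ 2) (g' : R) (1 + n' • x')) :
    NModEq (n * n' * n.gcd n') ((g⁻¹ * g'⁻¹ * g * g' : Rˣ) : R)
      (1 + (n * n') • (x * x' - x' * x)) := by
  set s := (n * n') • (x * x' - x' * x)
  set U : R := ((g⁻¹ * g'⁻¹ : Rˣ) : R)
  have ha : NModEq (n ^ 2) ((g : R) - 1) (n • x) := by
    rwa [NModEq.iff_sub_zero, sub_sub, ← NModEq.iff_sub_zero]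
  have ha' : NModEq (n' ^ 2) ((g' : R) - 1) (n' • x') := by
    rwa [NModEq.iff_sub_zero, sub_sub, ← NModEq.iff_sub_zero]
  -- `U` inverts `g'g ≡ 1 (mod gcd n n')`, and `s` carries the factor `n n'`.
  have hU : NModEq (n * n' * n.gcd n') (U * s) s := by
    have hinv : U * s - s = U * ((1 - (g' : R) * g) * s) := by
      rw [← mul_assoc, mul_sub, mul_one, units_inv_mul_inv_mul, sub_mul, one_mul]
    have hg1 := (NModEq.iff_sub_zero.2 ha.zero_of_sq_nsmul).of_dvd (Nat.gcd_dvd_left n n')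
    have hg'1 := (NModEq.iff_sub_zero.2 ha'.zero_of_sq_nsmul).of_dvd (Nat.gcd_dvd_right n n')
    have hprod := (NModEq.iff_sub_zero.1 (by simpa using (hg'1.mul hg1).symm)).mul_zero_of_zero
      (⟨_, sub_zero s⟩ : NModEq (n * n') s 0)
    rw [NModEq.iff_sub_zero, hinv, mul_comm (n * n')]
    simpa using hprod.mul_left U
  rw [NModEq.iff_sub_zero, ← sub_sub, units_commutator_sub_one, ← NModEq.iff_sub_zero]
  exact ((commutator_nModEq ha ha').mul_left U).trans hU

end Ring

theorem matModN_iff_nModEq {d p : ℕ} [Fact p.Prime] {q : ℕ}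
    {A B : Matrix (Fin d) (Fin d) ℤ_[p]} :
    MatModN q A B ↔ NModEq q A B := by
  simp only [MatModN, NModEq, Nat.cast_smul_eq_nsmul]

theorem Nat.gcd_dvd_mul_mul_gcd {n m n' m' : ℕ} (hm : m ∣ n ^ 2) (hm' : m' ∣ n' ^ 2) :
    Nat.gcd (m * n') (n * m') ∣ n * n' * n.gcd n' := by
  have hsq : Nat.gcd (n ^ 2 * n') (n * n' ^ 2) = n * n' * n.gcd n' := by
    rw [show n ^ 2 * n' = n * n' * n by ring, show n * n' ^ 2 = n * n' * n' by ring,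
      Nat.gcd_mul_left]
  exact hsq ▸ Nat.dvd_gcd ((Nat.gcd_dvd_left _ _).trans (Nat.mul_dvd_mul_right hm n'))
    ((Nat.gcd_dvd_right _ _).trans (Nat.mul_dvd_mul_left n hm'))

theorem stmt9_general {d : ℕ} {p : ℕ} [Fact p.Prime]
    (q₁ q₂ q₁' q₂' : ℕ)
    (h₂ : q₂ ∣ q₁ ^ 2) (h₂' : q₂' ∣ q₁' ^ 2)
    (g g' : (Matrix (Fin d) (Fin d) ℤ_[p])ˣ)
    (x x' : Matrix (Fin d) (Fin d) ℤ_[p])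
    (hg1 : MatModN q₁ (g : Matrix (Fin d) (Fin d) ℤ_[p]) 1)
    (hg'1 : MatModN q₁' (g' : Matrix (Fin d) (Fin d) ℤ_[p]) 1)
    (hgx : MatModN (q₁ ^ 2) (g : Matrix (Fin d) (Fin d) ℤ_[p]) (1 + (q₁ : ℤ_[p]) • x))
    (hg'x : MatModN (q₁' ^ 2) (g' : Matrix (Fin d) (Fin d) ℤ_[p]) (1 + (q₁' : ℤ_[p]) • x')) :
    MatModN (q₁ * q₁')
      ((g⁻¹ * g'⁻¹ * g * g' : (Matrix (Fin d) (Fin d) ℤ_[p])ˣ) : Matrix (Fin d) (Fin d) ℤ_[p]) 1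
    ∧
    MatModN (Nat.gcd (q₂ * q₁') (q₁ * q₂'))
      ((g⁻¹ * g'⁻¹ * g * g' : (Matrix (Fin d) (Fin d) ℤ_[p])ˣ) : Matrix (Fin d) (Fin d) ℤ_[p])
      (1 + ((q₁ * q₁' : ℕ) : ℤ_[p]) • (x * x' - x' * x)) := by
  simp only [matModN_iff_nModEq, Nat.cast_smul_eq_nsmul] at hg1 hg'1 hgx hg'x ⊢
  exact ⟨units_commutator_nModEq_one hg1 hg'1,
    (units_commutator_nModEq_one_add hgx hg'x).of_dvd (Nat.gcd_dvd_mul_mul_gcd h₂ h₂')⟩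

/-- Let `g, g'` be elements of a matrix group over `ℤ_p` with `g ≡ 1 (mod q₁)`
and `g' ≡ 1 (mod q₁')`.  Then the commutator `(g,g') = g⁻¹g'⁻¹gg'` satisfies
`(g,g') ≡ 1 (mod q₁q₁')`.  Moreover, writing `g = 1 + q₁ x + O(q₁²)` and
`g' = 1 + q₁' x' + O(q₁'²)`, one has `(g,g') ≡ 1 + q₁q₁'[x,x']` modulo
`q := gcd(q₂q₁', q₁q₂')`, whenever `q₁ ∣ q₂ ∣ q₁²` and `q₁' ∣ q₂' ∣ q₁'²`. -/
theorem stmt9 {d : ℕ} {p : ℕ} [Fact p.Prime]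
    (q₁ q₂ q₁' q₂' : ℕ)
    (h₁ : q₁ ∣ q₂) (h₂ : q₂ ∣ q₁ ^ 2) (h₁' : q₁' ∣ q₂') (h₂' : q₂' ∣ q₁' ^ 2)
    (g g' : (Matrix (Fin d) (Fin d) ℤ_[p])ˣ)
    (x x' : Matrix (Fin d) (Fin d) ℤ_[p])
    (hg1 : MatModN q₁ (g : Matrix (Fin d) (Fin d) ℤ_[p]) 1)
    (hg'1 : MatModN q₁' (g' : Matrix (Fin d) (Fin d) ℤ_[p]) 1)
    (hgx : MatModN (q₁ ^ 2) (g : Matrix (Fin d) (Fin d) ℤ_[p]) (1 + (q₁ : ℤ_[p]) • x))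
    (hg'x : MatModN (q₁' ^ 2) (g' : Matrix (Fin d) (Fin d) ℤ_[p]) (1 + (q₁' : ℤ_[p]) • x')) :
    MatModN (q₁ * q₁')
      ((g⁻¹ * g'⁻¹ * g * g' : (Matrix (Fin d) (Fin d) ℤ_[p])ˣ) : Matrix (Fin d) (Fin d) ℤ_[p]) 1
    ∧
    MatModN (Nat.gcd (q₂ * q₁') (q₁ * q₂'))
      ((g⁻¹ * g'⁻¹ * g * g' : (Matrix (Fin d) (Fin d) ℤ_[p])ˣ) : Matrix (Fin d) (Fin d) ℤ_[p])
      (1 + ((q₁ * q₁' : ℕ) : ℤ_[p]) • (x * x' - x' * x)) :=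
  stmt9_general q₁ q₂ q₁' q₂' h₂ h₂' g g' x x' hg1 hg'1 hgx hg'x
end

section
/- Let H be a finite group with a symmetric generating set Ω, and A ⊆ H symmetric with |∏₃ A| ≤ K|A| for the triple product set. For any x ∈ H and any subset X ⊆ H, one has |A X a A| ≥ |A| · |conj-classes met by Xa| · (average over represented conjugacy classes of 1/|C_H(x) ∩ A·A|), where C_H(x) is the centralizer. Consequently, there exists x₀ ∈ X such that |C_H(x₀a) ∩ A·A| ≥ (|A| / |∏_m A|) · |{conjugacy classes of H meeting Xa}| for appropriate bounded m. -/
/-!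
Helfgott's trick: `α y α⁻¹ = β y β⁻¹` forces `β⁻¹α ∈ C(y)`, so the conjugates of `y` by
elements of `A` number at least `|A| / |C(y) ∩ A⁻¹A|`. For each conjugacy class met by `Xa`, the
conjugates by `A` of a representative lie in that class and in `A X a A⁻¹ = A X a A`; summing
over the classes, with every centralizer bounded by the largest one `C(x₀a) ∩ AA`, `x₀ ∈ X`,
gives the inequality.
-/

open Finset
open scoped Pointwise

section

variable {G : Type*} [Group G]

theorem commute_inv_mul_of_conj_eq {α β y : G} (h : α * y * α⁻¹ = β * y * β⁻¹) :
    β⁻¹ * α * y = y * (β⁻¹ * α) :=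
  calc β⁻¹ * α * y = β⁻¹ * (α * y * α⁻¹) * α := by group
    _ = β⁻¹ * (β * y * β⁻¹) * α := by rw [h]
    _ = y * (β⁻¹ * α) := by group

variable [DecidableEq G]

theorem card_le_card_image_conj_mul_card_centralizer (A : Finset G) (y : G) :
    #A ≤ #(A.image fun α => α * y * α⁻¹) * #{h ∈ A⁻¹ * A | h * y = y * h} := by
  rw [mul_comm]
  refine card_le_mul_card_image A _ fun b hb => ?_
  obtain ⟨β, hβ, rfl⟩ := mem_image.mp hb
  refine card_le_card_of_injOn (β⁻¹ * ·) (fun α hα => ?_) fun _ _ _ _ => mul_left_cancel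
  obtain ⟨hαA, hαβ⟩ := mem_filter.mp hα
  exact mem_filter.mpr
    ⟨mul_mem_mul (inv_mem_inv hβ) hαA, commute_inv_mul_of_conj_eq hαβ⟩

theorem card_mul_card_image_conjClasses_le [DecidableEq (ConjClasses G)] (A Y : Finset G)
    {M : ℕ} (hM : ∀ y ∈ Y, #{h ∈ A⁻¹ * A | h * y = y * h} ≤ M) :
    #A * #(Y.image ConjClasses.mk) ≤ #(A * Y * A⁻¹) * M := by
  set S := A * Y * A⁻¹
  have hclass : ∀ c ∈ Y.image ConjClasses.mk, #A ≤ #{z ∈ S | ConjClasses.mk z = c} * M := by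
    intro c hc
    obtain ⟨y, hy, rfl⟩ := mem_image.mp hc
    have horbit : (A.image fun α => α * y * α⁻¹) ⊆
        {z ∈ S | ConjClasses.mk z = ConjClasses.mk y} := by
      intro z hz
      obtain ⟨α, hα, rfl⟩ := mem_image.mp hz
      exact mem_filter.mpr ⟨mul_mem_mul (mul_mem_mul hα hy) (inv_mem_inv hα),
        ConjClasses.mk_eq_mk_iff_isConj.mpr (isConj_iff.mpr ⟨α, rfl⟩).symm⟩
    calc #A ≤ #(A.image fun α => α * y * α⁻¹) * #{h ∈ A⁻¹ * A | h * y = y * h} :=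
          card_le_card_image_conj_mul_card_centralizer A y
      _ ≤ _ := Nat.mul_le_mul (card_le_card horbit) (hM y hy)
  calc #A * #(Y.image ConjClasses.mk) = ∑ _c ∈ Y.image ConjClasses.mk, #A := by
        rw [sum_const, smul_eq_mul, mul_comm]
    _ ≤ ∑ c ∈ Y.image ConjClasses.mk, #{z ∈ S | ConjClasses.mk z = c} * M :=
        sum_le_sum hclass
    _ = #{z ∈ S | ConjClasses.mk z ∈ Y.image ConjClasses.mk} * M := by
        rw [← sum_mul, sum_card_fiberwise_eq_card_filter]
    _ ≤ #S * M := Nat.mul_le_mul_right _ (card_filter_le _ _)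

end

theorem stmt12_general {H : Type*} [Group H] [Fintype H] [DecidableEq H]
    (A : Finset H) (hAsymm : A⁻¹ = A)
    (X : Finset H) (hX : X.Nonempty) (a : H) :
    ∃ x₀ ∈ X,
      A.card * ((X * {a}).image (ConjClasses.mk (α := H))).card ≤
        (A * X * {a} * A).card *
          ((A * A).filter (fun h => h * (x₀ * a) = (x₀ * a) * h)).card := by
  obtain ⟨x₀, hx₀, hmax⟩ := X.exists_max_image
    (fun x => #{h ∈ A * A | h * (x * a) = x * a * h}) hX
  refine ⟨x₀, hx₀, ?_⟩
  have hM : ∀ y ∈ X * {a}, #{h ∈ A⁻¹ * A | h * y = y * h} ≤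
      #{h ∈ A * A | h * (x₀ * a) = x₀ * a * h} := by
    intro y hy
    obtain ⟨x, hx, b, hb, rfl⟩ := mem_mul.mp hy
    rw [mem_singleton.mp hb, hAsymm]
    exact hmax x hx
  have := card_mul_card_image_conjClasses_le A _ hM
  rwa [← mul_assoc, hAsymm] at this

/-- **Helfgott's trick for large centralizers.**  Let `H` be a finite group with a
symmetric generating set `Ω`, and `A ⊆ H` symmetric with `|A·A·A| ≤ K|A|`.  For any `a ∈ H` and
nonempty `X ⊆ H` there exists `x₀ ∈ X` with
`|C_H(x₀a) ∩ A·A| · |A X a A| ≥ |A| · |{conjugacy classes of H meeting Xa}|`;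
i.e. `|C_H(x₀a) ∩ A·A| ≥ (|A| / |AXaA|) · |conj(Xa)|`. -/
theorem stmt12 {H : Type*} [Group H] [Fintype H] [DecidableEq H]
    (Ω : Finset H) (hΩsymm : Ω⁻¹ = Ω) (hΩgen : Subgroup.closure (Ω : Set H) = ⊤)
    (A : Finset H) (hAsymm : A⁻¹ = A) (K : ℝ)
    (htriple : ((A * A * A).card : ℝ) ≤ K * (A.card : ℝ))
    (X : Finset H) (hX : X.Nonempty) (a : H) :
    ∃ x₀ ∈ X,
      A.card * ((X * {a}).image (ConjClasses.mk (α := H))).card ≤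
        (A * X * {a} * A).card *
          ((A * A).filter (fun h => h * (x₀ * a) = (x₀ * a) * h)).card :=
  stmt12_general A hAsymm X hX a
end

section
/- Let q₀ ∈ V(Q) for Q = p^N with n₃ small: Suppose x ∈ h(O') decomposes as qx = h' + Σ_φ x_φ with h' ∈ h(O') ∩ t(K') and x_φ ∈ h(O') ∩ h_φ(K'), and Ad(g)(qx) − qx = Σ_φ (φ(g) − 1)x_φ = qq'y for some y ∈ h(O'). If also qy = Σ_φ y_φ with y_φ ∈ h(O') ∩ h_φ(K'), and |φ(g) − 1| > |q| for all φ, then x_φ ∈ (q'/q)·h(O') for every φ. -/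
/-!
Multiplying `Σ_φ (φ(g) − 1) x_φ = q q' y` by `q` and substituting `q y = Σ_φ y_φ` gives two
decompositions along the independent weight spaces, so `q (φ(g) − 1) x_φ = q q' y_φ` for each `φ`.
Since `q = c (φ(g) − 1)` and `q' = q (q'/q)`, the right side is `q (φ(g) − 1) · c (q'/q) y_φ`, and
cancelling the nonzero scalar `q (φ(g) − 1)` of `K'` leaves `x_φ = (q'/q) · c y_φ`.
When `q` vanishes in `K'`, instead `h' + Σ_φ x_φ = q x = 0` forces every `x_φ = 0`.
-/

open Finset
open scoped Pointwise

section Independent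

variable {R M ι : Type*} [Ring R] [AddCommGroup M] [Module R M] [Fintype ι]

theorem iSupIndep.eq_zero_of_sum_eq_zero {p : ι → Submodule R M} (h : iSupIndep p)
    {f : ι → M} (hf : ∀ i, f i ∈ p i) (hs : ∑ i, f i = 0) (i : ι) : f i = 0 :=
  (iSupIndep_iff_finsetSum_eq_zero_imp_eq_zero p).mp h univ f (fun i _ => hf i) hs i
    (mem_univ i)

theorem iSupIndep.eq_of_sum_eq_sum {p : ι → Submodule R M} (h : iSupIndep p)
    {f g : ι → M} (hf : ∀ i, f i ∈ p i) (hg : ∀ i, g i ∈ p i) (hs : ∑ i, f i = ∑ i, g i)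
    (i : ι) : f i = g i :=
  sub_eq_zero.mp <| h.eq_zero_of_sum_eq_zero (fun j => sub_mem (hf j) (hg j))
    (by rw [sum_sub_distrib, hs, sub_self]) i

theorem iSupIndep.eq_zero_of_add_sum_eq_zero {t : Submodule R M} {p : ι → Submodule R M}
    (h : iSupIndep fun o : Option ι => o.elim t p) {a : M} (ha : a ∈ t)
    {f : ι → M} (hf : ∀ i, f i ∈ p i) (hs : a + ∑ i, f i = 0) (i : ι) : f i = 0 :=
  h.eq_zero_of_sum_eq_zero (f := fun o => o.elim a f) (Option.rec ha hf)
    (by rwa [Fintype.sum_option]) (some i)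

end Independent

theorem eq_smul_of_algebraMap_smul_eq {R K V : Type*} [CommRing R] [Field K] [Algebra R K]
    [AddCommGroup V] [Module K V] [Module R V] [IsScalarTower R K V] {a b : R}
    (ha : algebraMap R K a ≠ 0) {x y : V}
    (h : algebraMap R K a • x = algebraMap R K (a * b) • y) : x = b • y := by
  rw [map_mul, mul_smul, algebraMap_smul K b y] at h
  exact smul_right_injective V ha h

theorem stmt17_general {O' K' V : Type*} [CommRing O']
    [Field K'] [Algebra O' K']
    [AddCommGroup V] [Module K' V] [Module O' V] [IsScalarTower O' K' V]
    (L : Submodule O' V)            -- the lattice h(O')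
    (t : Submodule K' V)            -- the torus part t(K')
    {Φ : Type*} [Fintype Φ]
    (hφ : Φ → Submodule K' V)       -- the weight spaces h_φ(K')
    (hindep : iSupIndep (fun o : Option Φ => o.elim t hφ))
    (φg : Φ → O')                   -- the scalars φ(g)
    (q q' rq : O') (hrq : q' = q * rq)      -- rq = q'/q
    (x y : V)
    (h' : V) (hh' : h' ∈ t.restrictScalars O' ⊓ L)
    (xφ yφ : Φ → V)
    (hxφL : ∀ i, xφ i ∈ (hφ i).restrictScalars O' ⊓ L)
    (hyφL : ∀ i, yφ i ∈ (hφ i).restrictScalars O' ⊓ L)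
    (hsum : algebraMap O' K' q • x = h' + ∑ i, xφ i)
    (hAd : (∑ i, algebraMap O' K' (φg i - 1) • xφ i) = algebraMap O' K' (q * q') • y)
    (hqy : algebraMap O' K' q • y = ∑ i, yφ i)
    (hreg : ∀ i, ∃ c : O', ¬ IsUnit c ∧ q = c * (φg i - 1)) :  -- |φ(g) − 1| > |q|
    ∀ i, xφ i ∈ rq • L := by
  intro i
  have hxφ : ∀ j, xφ j ∈ hφ j := fun j => (hxφL j).1
  by_cases hq : algebraMap O' K' q = 0
  · have hzero : h' + ∑ j, xφ j = 0 := by rw [← hsum, hq, zero_smul]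
    rw [hindep.eq_zero_of_add_sum_eq_zero hh'.1 hxφ hzero i]
    exact zero_mem _
  obtain ⟨c, -, hc⟩ := hreg i
  have hweights : ∑ j, algebraMap O' K' (q * (φg j - 1)) • xφ j
      = ∑ j, algebraMap O' K' (q * q') • yφ j := by
    simp only [map_mul, mul_smul, ← smul_sum, hAd, ← hqy]
    rw [smul_comm (algebraMap O' K' q') _ y]
  have hcomponent := (hindep.comp (Option.some_injective Φ)).eq_of_sum_eq_sum
    (fun j => (hφ j).smul_mem _ (hxφ j)) (fun j => (hφ j).smul_mem _ (hyφL j).1) hweights i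
  have hne : algebraMap O' K' (q * (φg i - 1)) ≠ 0 := by
    rw [map_mul]
    refine mul_ne_zero hq fun hd => hq ?_
    rw [hc, map_mul, hd, mul_zero]
  rw [show q * q' = q * (φg i - 1) * (rq * c) by rw [hrq, hc]; ring] at hcomponent
  rw [eq_smul_of_algebraMap_smul_eq hne hcomponent, mul_smul]
  exact Submodule.smul_mem_pointwise_smul _ rq L (L.smul_mem c (hyφL i).2)

/-- In the setting of an `O'`-lattice `h(O')` in `h(K') = t ⊕ ⊕_φ h_φ`,
suppose `qx = h' + Σ_φ x_φ` with `h' ∈ h(O') ∩ t(K')` and `x_φ ∈ h(O') ∩ h_φ(K')`, and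
`Ad(g)(qx) − qx = Σ_φ (φ(g) − 1)x_φ = qq'y` for some `y ∈ h(O')`.  If also `qy = Σ_φ y_φ`
with `y_φ ∈ h(O') ∩ h_φ(K')`, and `|φ(g) − 1| > |q|` for all `φ`, then
`x_φ ∈ (q'/q)·h(O')` for every `φ`. -/
theorem stmt17 {O' K' V : Type*} [CommRing O'] [IsDomain O'] [ValuationRing O']
    [Field K'] [Algebra O' K'] [IsFractionRing O' K']
    [AddCommGroup V] [Module K' V] [Module O' V] [IsScalarTower O' K' V]
    (L : Submodule O' V)            -- the lattice h(O')
    (t : Submodule K' V)            -- the torus part t(K')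
    {Φ : Type*} [Fintype Φ]
    (hφ : Φ → Submodule K' V)       -- the weight spaces h_φ(K')
    (hdecomp : t ⊔ (⨆ i, hφ i) = ⊤)
    (hindep : iSupIndep (fun o : Option Φ => o.elim t hφ))
    (φg : Φ → O')                   -- the scalars φ(g)
    (q q' rq : O') (hrq : q' = q * rq)      -- rq = q'/q
    (x y : V) (hx : x ∈ L) (hy : y ∈ L)
    (h' : V) (hh' : h' ∈ t.restrictScalars O' ⊓ L)
    (xφ yφ : Φ → V)
    (hxφL : ∀ i, xφ i ∈ (hφ i).restrictScalars O' ⊓ L)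
    (hyφL : ∀ i, yφ i ∈ (hφ i).restrictScalars O' ⊓ L)
    (hsum : algebraMap O' K' q • x = h' + ∑ i, xφ i)
    (hAd : (∑ i, algebraMap O' K' (φg i - 1) • xφ i) = algebraMap O' K' (q * q') • y)
    (hqy : algebraMap O' K' q • y = ∑ i, yφ i)
    (hreg : ∀ i, ∃ c : O', ¬ IsUnit c ∧ q = c * (φg i - 1)) :  -- |φ(g) − 1| > |q|
    ∀ i, xφ i ∈ rq • L :=
  stmt17_general L t hφ hindep φg q q' rq hrq x y h' hh' xφ yφ hxφL hyφL hsum hAd hqy hreg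
end
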